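/- Let A and B be N×N complex matrices (representing bipartite pure states |Ψ⟩ = Σ_{i,j} a_{ij}|i⟩⊗|j⟩ and |Φ⟩ = Σ_{i,j} b_{ij}|i⟩⊗|j⟩). Then there exist N×N unitary matrices U and V with B = U·A·Vᵀ (i.e., the two pure states are equivalent under local unitary transformations) if and only if Tr((A·A†)^α) = Tr((B·B†)^α) for all α = 1, …, N. -/

import Mathlib

/-!
The quantities `Tr((AA†)^k)`, `k = 1, …, N`, are the power sums of the eigenvalues of the positive
semidefinite matrix `AA†`, so by Newton's identities they determine its characteristic polynomial
and hence its eigenvalues `λᵢ`. Conversely these eigenvalues determine `A` up to local unitaries: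
every `A` has a singular value decomposition `A = U · diag(√λᵢ) · W` with `U`, `W` unitary.
-/

open Matrix Finset Polynomial

namespace MvPolynomial

variable {σ R : Type*} [Fintype σ] [CommRing R] [IsDomain R] [CharZero R]

theorem aeval_esymm_eq_of_aeval_psum_eq {x y : σ → R}
    (h : ∀ k, 1 ≤ k → k ≤ Fintype.card σ → aeval x (psum σ R k) = aeval y (psum σ R k))
    {k : ℕ} (hk : k ≤ Fintype.card σ) :
    aeval x (esymm σ R k) = aeval y (esymm σ R k) := by
  induction k using Nat.strong_induction_on with
  | _ k ih =>
    obtain rfl | hk0 := Nat.eq_zero_or_pos k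
    · simp
    have newton (z : σ → R) := congrArg (aeval (R := R) z) (mul_esymm_eq_sum σ R k)
    simp only [map_mul, map_natCast, map_sum, map_pow, map_neg, map_one] at newton
    refine mul_left_cancel₀ (Nat.cast_ne_zero.mpr hk0.ne' : (k : R) ≠ 0) ?_
    rw [newton x, newton y]
    congr 1
    refine Finset.sum_congr rfl fun a ha => ?_
    rw [Finset.mem_filter, Finset.HasAntidiagonal.mem_antidiagonal] at ha
    rw [ih a.1 ha.2 (by omega), h a.2 (by omega) (by omega)]

end MvPolynomial

theorem prod_X_sub_C_eq_of_sum_pow_eq {σ R : Type*} [Fintype σ] [CommRing R] [IsDomain R]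
    [CharZero R] {x y : σ → R}
    (h : ∀ k, 1 ≤ k → k ≤ Fintype.card σ → ∑ i, x i ^ k = ∑ i, y i ^ k) :
    ∏ i, (X - C (x i)) = ∏ i, (X - C (y i)) := by
  have vieta (z : σ → R) : ∏ i, (X - C (z i)) = ∑ j ∈ range (Fintype.card σ + 1),
      (-1) ^ j * (C (MvPolynomial.aeval z (MvPolynomial.esymm σ R j)) *
        X ^ (Fintype.card σ - j)) := by
    simp_rw [MvPolynomial.aeval_esymm_eq_multiset_esymm]
    rw [show Fintype.card σ = Multiset.card (univ.val.map z) by simp,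
      ← Multiset.prod_X_sub_X_eq_sum_esymm, Multiset.map_map]
    rfl
  rw [vieta, vieta]
  refine Finset.sum_congr rfl fun j hj => ?_
  rw [MvPolynomial.aeval_esymm_eq_of_aeval_psum_eq (fun k hk hk' => ?_)
    (Nat.lt_succ_iff.mp (Finset.mem_range.mp hj))]
  simpa [MvPolynomial.psum] using h k hk hk'

namespace Matrix

variable {n R 𝕜 : Type*} [Fintype n] [DecidableEq n]

section CommRing

variable [CommRing R] [StarRing R]

theorem trace_pow_unitary_mul_mul_star {U : Matrix n n R} (hU : U ∈ unitaryGroup n R)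
    (M : Matrix n n R) (k : ℕ) : ((U * M * star U) ^ k).trace = (M ^ k).trace := by
  rw [← Unitary.conjStarAlgAut_apply (S := R) (u := ⟨U, hU⟩), ← map_pow,
    Unitary.conjStarAlgAut_apply, trace_mul_cycle, Unitary.coe_star_mul_self, one_mul]

theorem mul_unitary_mul_conjTranspose_self {m : Type*} {W : Matrix n n R}
    (hW : W ∈ unitaryGroup n R) (M : Matrix m n R) : (M * W) * (M * W)ᴴ = M * Mᴴ := by
  rw [conjTranspose_mul, Matrix.mul_assoc, ← Matrix.mul_assoc W, ← star_eq_conjTranspose,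
    mem_unitaryGroup_iff.mp hW, Matrix.one_mul]

end CommRing

variable [RCLike 𝕜]

theorem IsHermitian.trace_pow_eq_sum_eigenvalues_pow {A : Matrix n n 𝕜} (hA : A.IsHermitian)
    (k : ℕ) : (A ^ k).trace = ∑ i, (hA.eigenvalues i : 𝕜) ^ k := by
  conv_lhs => rw [hA.spectral_theorem, Unitary.conjStarAlgAut_apply]
  rw [trace_pow_unitary_mul_mul_star hA.eigenvectorUnitary.2, diagonal_pow, trace_diagonal]
  rfl

theorem IsHermitian.eigenvalues_eq_of_trace_pow_eq {A B : Matrix n n 𝕜} (hA : A.IsHermitian)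
    (hB : B.IsHermitian)
    (h : ∀ k, 1 ≤ k → k ≤ Fintype.card n → (A ^ k).trace = (B ^ k).trace) :
    hA.eigenvalues = hB.eigenvalues := by
  rw [eigenvalues_eq_eigenvalues_iff, hA.charpoly_eq, hB.charpoly_eq]
  refine prod_X_sub_C_eq_of_sum_pow_eq fun k hk hk' => ?_
  rw [← hA.trace_pow_eq_sum_eigenvalues_pow, ← hB.trace_pow_eq_sum_eigenvalues_pow]
  exact h k hk hk'

theorem exists_unitary_eq_diagonal_sqrt_mul_of_mul_conjTranspose_eq_diagonal
    {C : Matrix n n 𝕜} {d : n → ℝ} (hd : 0 ≤ d) (hC : C * Cᴴ = diagonal (fun i => (d i : 𝕜))) :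
    ∃ W ∈ unitaryGroup n 𝕜, C = diagonal (fun i => (√(d i) : 𝕜)) * W := by
  -- The rows of `C` are orthogonal with squared norms `d i`; normalise the nonzero ones and
  -- complete them to an orthonormal basis, which gives the rows of `W`.
  set r : n → EuclideanSpace 𝕜 n := fun i => WithLp.toLp 2 (C i)
  have hr (i j : n) : inner 𝕜 (r i) (r j) = if i = j then (d i : 𝕜) else 0 := by
    rw [show inner 𝕜 (r i) (r j) = (C * Cᴴ) j i by
      simp only [r, PiLp.inner_apply, RCLike.inner_apply, mul_apply, conjTranspose_apply,
        RCLike.star_def], hC, diagonal_apply]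
    split_ifs <;> simp_all
  set v : n → EuclideanSpace 𝕜 n := fun i => ((√(d i))⁻¹ : 𝕜) • r i
  have hv : Orthonormal 𝕜 (({i | d i ≠ 0} : Set n).domRestrict v) := by
    rw [orthonormal_iff_ite]
    rintro ⟨i, hi⟩ ⟨j, -⟩
    simp only [Set.domRestrict_apply, v, inner_smul_left, inner_smul_right, hr, Subtype.mk.injEq]
    split_ifs with h
    · subst h
      rw [map_inv₀, RCLike.conj_ofReal]
      norm_cast
      rw [← mul_assoc, ← mul_inv, Real.mul_self_sqrt (hd i), inv_mul_cancel₀ hi]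
    · simp
  obtain ⟨b, hb⟩ := hv.exists_orthonormalBasis_extension_of_card_eq (by simp)
  refine ⟨((EuclideanSpace.basisFun n 𝕜).toBasis.toMatrix b)ᵀ, transpose_mem_unitaryGroup_iff.2
    ((EuclideanSpace.basisFun n 𝕜).toMatrix_orthonormalBasis_mem_unitary b), ?_⟩
  ext i j
  simp only [diagonal_mul, transpose_apply, Module.Basis.toMatrix_apply,
    OrthonormalBasis.coe_toBasis_repr_apply, EuclideanSpace.basisFun_repr]
  by_cases hi : d i = 0
  · have hri : r i = 0 := inner_self_eq_zero.mp (by rw [hr, if_pos rfl, hi, RCLike.ofReal_zero])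
    simpa [hi] using congrArg (fun x : EuclideanSpace 𝕜 n => x j) hri
  · have hsqrt : (√(d i) : 𝕜) ≠ 0 := by
      exact_mod_cast (Real.sqrt_pos.2 ((hd i).lt_of_ne' hi)).ne'
    simp [hb i hi, v, r, mul_inv_cancel_left₀ hsqrt]

theorem exists_unitary_mul_diagonal_sqrt_eigenvalues_mul_unitary (A : Matrix n n 𝕜) :
    ∃ U ∈ unitaryGroup n 𝕜, ∃ W ∈ unitaryGroup n 𝕜, A = U *
      diagonal (fun i => (√((isHermitian_mul_conjTranspose_self A).eigenvalues i) : 𝕜)) * W := by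
  set hAA := isHermitian_mul_conjTranspose_self A
  have hdiag : (star (hAA.eigenvectorUnitary : Matrix n n 𝕜) * A) *
      (star (hAA.eigenvectorUnitary : Matrix n n 𝕜) * A)ᴴ =
      diagonal (fun i => (hAA.eigenvalues i : 𝕜)) := by
    simpa [conjTranspose_mul, mul_assoc, star_eq_conjTranspose, Function.comp_def] using
      hAA.conjStarAlgAut_star_eigenvectorUnitary
  obtain ⟨W, hW, hUA⟩ := exists_unitary_eq_diagonal_sqrt_mul_of_mul_conjTranspose_eq_diagonal
    (eigenvalues_self_mul_conjTranspose_nonneg A) hdiag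
  refine ⟨_, hAA.eigenvectorUnitary.2, W, hW, ?_⟩
  rw [mul_assoc, ← hUA, ← mul_assoc, mem_unitaryGroup_iff.mp hAA.eigenvectorUnitary.2, one_mul]

end Matrix

theorem pure_LU_iff_trace_invariants (N : ℕ) (A B : Matrix (Fin N) (Fin N) ℂ) :
    (∃ U V : Matrix (Fin N) (Fin N) ℂ,
        U ∈ Matrix.unitaryGroup (Fin N) ℂ ∧ V ∈ Matrix.unitaryGroup (Fin N) ℂ ∧
        B = U * A * Vᵀ) ↔
      ∀ α : ℕ, 1 ≤ α → α ≤ N → ((A * Aᴴ) ^ α).trace = ((B * Bᴴ) ^ α).trace := by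
  constructor
  · rintro ⟨U, V, hU, hV, rfl⟩ α - -
    have hBB : U * A * Vᵀ * (U * A * Vᵀ)ᴴ = U * (A * Aᴴ) * star U := by
      rw [mul_unitary_mul_conjTranspose_self (transpose_mem_unitaryGroup_iff.2 hV),
        conjTranspose_mul, star_eq_conjTranspose]
      simp only [mul_assoc]
    rw [hBB, trace_pow_unitary_mul_mul_star hU]
  · intro h
    have heig := (isHermitian_mul_conjTranspose_self A).eigenvalues_eq_of_trace_pow_eq
      (isHermitian_mul_conjTranspose_self B) (by simpa using h)
    obtain ⟨UA, hUA, WA, hWA, hA⟩ := exists_unitary_mul_diagonal_sqrt_eigenvalues_mul_unitary A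
    obtain ⟨UB, hUB, WB, hWB, hB⟩ := exists_unitary_mul_diagonal_sqrt_eigenvalues_mul_unitary B
    refine ⟨UB * star UA, (star WA * WB)ᵀ, mul_mem hUB (Unitary.star_mem hUA),
      transpose_mem_unitaryGroup_iff.2 (mul_mem (Unitary.star_mem hWA) hWB), ?_⟩
    rw [transpose_transpose, hB, ← heig]
    conv_rhs => rw [hA]
    simp only [mul_assoc, ← mul_assoc (star UA), ← mul_assoc WA, mem_unitaryGroup_iff'.mp hUA,
      mem_unitaryGroup_iff.mp hWA, one_mul]
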